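/- arXiv:2006.02429 — 3 statements merged into one kernel-verified Lean document; each statement's English description precedes it below -/
import Mathlib

section
/- With the notation above (t_0 > 0, t_n ≥ 2t_{n-1}, some t_n with all coordinates positive, W = {±t_n : n ≥ 0} ∪ {0}, I_n = X_{-t_n,-t_{n-1}}, J_n = X_{-t_n,-t_{n-1}-t_{n-2}}), for every n ≥ 0 the set (⋃_{m ≥ n+2} J_m) + W contains no point of I_n, and the set J_{n+1} + (W \ {t_n}) contains no point of I_n. -/
open Pointwise

/-- `ℤ^d` equipped with the lexicographic order. -/
abbrev Zd (d : ℕ) := Lex (Fin d → ℤ)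

/-- the value `t (n-1)` with the convention `t_{-1} = 0`. -/
def tprev {d : ℕ} (t : ℕ → Zd d) : ℕ → Zd d := fun n => if n = 0 then 0 else t (n - 1)

/-- `I_n = X_{-t_n, -t_{n-1}}`. -/
def Iset {d : ℕ} (t : ℕ → Zd d) (n : ℕ) : Set (Zd d) :=
  {x | -(t n) ≤ x} \ {x | -(tprev t n) ≤ x}

/-- `J_n = X_{-t_n, -t_{n-1} - t_{n-2}}`. -/
def Jset {d : ℕ} (t : ℕ → Zd d) (n : ℕ) : Set (Zd d) :=
  {x | -(t n) ≤ x} \ {x | -(tprev t n + tprev t (n - 1)) ≤ x}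

/-- `W = {t_n : n ≥ 0} ∪ {0} ∪ {-t_n : n ≥ 0}`. -/
def Wset {d : ℕ} (t : ℕ → Zd d) : Set (Zd d) :=
  Set.range t ∪ {0} ∪ -(Set.range t)

/-- `V = {t_n : n ≥ 0} ∪ {-t_n : n ≥ 0}`. -/
def Vset {d : ℕ} (t : ℕ → Zd d) : Set (Zd d) :=
  Set.range t ∪ -(Set.range t)

/-- `(A, B)` is a co-minimal pair: `A + B = G` and removing any single element of
`A` or of `B` destroys the complement property. -/
def IsCoMinimalPair {G : Type*} [AddCommGroup G] (A B : Set G) : Prop :=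
  A + B = Set.univ ∧
  (∀ a ∈ A, (A \ {a}) + B ≠ Set.univ) ∧
  (∀ b ∈ B, A + (B \ {b}) ≠ Set.univ)

/-!
Relative to any index `m`, each `w ∈ W` is `t m`, at least `t (m + 1)`, or at most `t (m - 1)`
(at most `0` when `m = 0`). For `y ∈ J_m` we have `-t m ≤ y < -(t (m - 1) + t (m - 2))`, so
`w ≥ t m` puts `y + w` at or above `0`, beyond the negative set `I_n`, while `w ≤ t (m - 1)` puts
`y + w` below `-t (m - 2) ≤ -t n`, under `I_n`, whenever `n ≤ m - 2`. For `J_{n+1}` the same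
split is made at the index `n`, and the alternative `w = t n` is the one removed from `W`.
-/

section
variable {d : ℕ} {t : ℕ → Zd d}

lemma tprev_succ (t : ℕ → Zd d) (n : ℕ) : tprev t (n + 1) = t n := by
  simp [tprev]

lemma tprev_nonneg (hmono : Monotone t) (hpos : 0 < t 0) (n : ℕ) : 0 ≤ tprev t n := by
  cases n with
  | zero => simp [tprev]
  | succ n => rw [tprev_succ]; exact hpos.le.trans (hmono n.zero_le)

lemma mem_Iset_iff {x : Zd d} {n : ℕ} : x ∈ Iset t n ↔ -t n ≤ x ∧ x < -tprev t n :=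
  and_congr_right fun _ => not_le (a := -tprev t n) (b := x)

lemma mem_Jset_iff {y : Zd d} {m : ℕ} :
    y ∈ Jset t m ↔ -t m ≤ y ∧ y < -(tprev t m + tprev t (m - 1)) :=
  and_congr_right fun _ => not_le (a := -(tprev t m + tprev t (m - 1))) (b := y)

lemma notMem_Iset_of_nonneg (hmono : Monotone t) (hpos : 0 < t 0) {x : Zd d} (hx : 0 ≤ x)
    (n : ℕ) : x ∉ Iset t n := fun h =>
  ((mem_Iset_iff.1 h).2.trans_le (neg_nonpos.2 (tprev_nonneg hmono hpos n))).not_ge hx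

lemma notMem_Iset_of_lt {x : Zd d} {n : ℕ} (hx : x < -t n) : x ∉ Iset t n := fun h =>
  hx.not_ge (mem_Iset_iff.1 h).1

lemma mem_Wset_trichotomy (hmono : Monotone t) (hpos : 0 < t 0) {w : Zd d} (hw : w ∈ Wset t)
    (m : ℕ) : w = t m ∨ t (m + 1) ≤ w ∨ w ≤ tprev t m := by
  rcases hw with (⟨k, rfl⟩ | rfl) | ⟨k, hk⟩
  · rcases lt_trichotomy k m with hkm | rfl | hmk
    · obtain ⟨j, rfl⟩ : ∃ j, m = j + 1 := ⟨m - 1, by omega⟩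
      exact Or.inr (Or.inr (by rw [tprev_succ]; exact hmono (by omega)))
    · exact Or.inl rfl
    · exact Or.inr (Or.inl (hmono hmk))
  · exact Or.inr (Or.inr (tprev_nonneg hmono hpos m))
  · have hw : w = -t k := by rw [hk, neg_neg]
    refine Or.inr (Or.inr (le_trans ?_ (tprev_nonneg hmono hpos m)))
    rw [hw, neg_nonpos]
    exact hpos.le.trans (hmono k.zero_le)

lemma add_notMem_Iset_of_mem_Jset (hmono : Monotone t) (hpos : 0 < t 0) {n m : ℕ}
    (hm : n + 2 ≤ m) {y w : Zd d} (hy : y ∈ Jset t m) (hw : w ∈ Wset t) :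
    y + w ∉ Iset t n := by
  obtain ⟨k, rfl⟩ : ∃ k, m = k + 2 := ⟨m - 2, by omega⟩
  obtain ⟨hlo, hhi⟩ := mem_Jset_iff.1 hy
  simp only [show k + 2 - 1 = k + 1 by omega, tprev_succ] at hhi
  have below (hle : w ≤ t (k + 1)) : y + w < -t n :=
    calc y + w < -(t (k + 1) + t k) + t (k + 1) := add_lt_add_of_lt_of_le hhi hle
      _ = -t k := by abel
      _ ≤ -t n := neg_le_neg (hmono (by omega))
  rcases mem_Wset_trichotomy hmono hpos hw (k + 1) with rfl | hw | hw
  · exact notMem_Iset_of_lt (below le_rfl)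
  · exact notMem_Iset_of_nonneg hmono hpos (by simpa using add_le_add hlo hw) n
  · rw [tprev_succ] at hw
    exact notMem_Iset_of_lt (below (hw.trans (hmono k.le_succ)))

lemma add_notMem_Iset_of_mem_Jset_succ (hmono : Monotone t) (hpos : 0 < t 0) {n : ℕ}
    {y w : Zd d} (hy : y ∈ Jset t (n + 1)) (hw : w ∈ Wset t) (hwn : w ≠ t n) :
    y + w ∉ Iset t n := by
  obtain ⟨hlo, hhi⟩ := mem_Jset_iff.1 hy
  simp only [Nat.add_sub_cancel, tprev_succ] at hhi
  rcases mem_Wset_trichotomy hmono hpos hw n with rfl | hw | hw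
  · exact absurd rfl hwn
  · exact notMem_Iset_of_nonneg hmono hpos (by simpa using add_le_add hlo hw) n
  · refine notMem_Iset_of_lt ?_
    calc y + w < -(t n + tprev t n) + tprev t n := add_lt_add_of_lt_of_le hhi hw
      _ = -t n := by abel

end

theorem stmt3_general {d : ℕ} (t : ℕ → Zd d) (hmono : StrictMono t)
    (hpos : 0 < t 0) :
    ∀ n : ℕ,
      (∀ x ∈ Iset t n, x ∉ (⋃ m : ℕ, ⋃ (_ : n + 2 ≤ m), Jset t m) + Wset t) ∧
      (∀ x ∈ Iset t n, x ∉ Jset t (n + 1) + (Wset t \ {t n})) := by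
  refine fun n => ⟨?_, ?_⟩
  · rintro x hx ⟨y, hy, w, hw, rfl⟩
    obtain ⟨m, hm, hy⟩ : ∃ m, n + 2 ≤ m ∧ y ∈ Jset t m := by simpa using hy
    exact add_notMem_Iset_of_mem_Jset hmono.monotone hpos hm hy hw hx
  · rintro x hx ⟨y, hy, w, ⟨hw, hwn⟩, rfl⟩
    exact add_notMem_Iset_of_mem_Jset_succ hmono.monotone hpos hy hw hwn hx

theorem stmt3 {d : ℕ} (hd : 0 < d) (t : ℕ → Zd d) (hmono : StrictMono t)
    (hpos : 0 < t 0) (hgrow : ∀ n : ℕ, 2 • t n ≤ t (n + 1))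
    (hcoord : ∃ n : ℕ, ∀ i : Fin d, 0 < ofLex (t n) i) :
    ∀ n : ℕ,
      (∀ x ∈ Iset t n, x ∉ (⋃ m : ℕ, ⋃ (_ : n + 2 ≤ m), Jset t m) + Wset t) ∧
      (∀ x ∈ Iset t n, x ∉ Jset t (n + 1) + (Wset t \ {t n})) :=
  stmt3_general t hmono hpos
end

section
/- With the same notation, if t_n ≥ 3t_{n-1} for all n ≥ 1, then for every n ≥ 1 the inclusion (-(J_1 ∪ ⋯ ∪ J_n)) + (W \ {-t_n}) ⊆ ℤ^d_{≤ -2t_n} ∪ (ℤ^d \ ℤ^d_{≤ -t_{n-1}}) holds. -/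
open Pointwise

/-!
Write an element of the left-hand side as `a + b` with `-a ∈ J_m`, `m ≤ n`, and `b ∈ W`,
`b ≠ -t_n`. Then `0 < a ≤ t_m ≤ t_n`, and by monotonicity of `t` either `b ≥ -t_{n-1}`, so that
`a + b > -t_{n-1}`, or `b ≤ -t_{n+1} ≤ -3t_n`, so that `a + b ≤ t_n - 3t_n = -2t_n`.
-/

section

variable {d : ℕ} {t : ℕ → Zd d}

lemma tprev_nonneg_s6 (ht : ∀ k, 0 ≤ t k) (n : ℕ) : 0 ≤ tprev t n := by
  unfold tprev
  split_ifs
  exacts [le_rfl, ht _]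

lemma neg_mem_Ioc_of_mem_Jset (ht : ∀ k, 0 ≤ t k) {m : ℕ} {x : Zd d} (hx : x ∈ Jset t m) :
    -x ∈ Set.Ioc 0 (t m) := by
  obtain ⟨hlow, hhigh⟩ := hx
  have hneg : x < 0 :=
    (not_le.mp hhigh).trans_le
      (neg_nonpos.mpr (add_nonneg (tprev_nonneg_s6 ht m) (tprev_nonneg_s6 ht (m - 1))))
  exact ⟨neg_pos.mpr hneg, neg_le.mp hlow⟩

lemma Wset_diff_singleton_neg_subset (hmono : Monotone t) (h0 : 0 ≤ t 0) (n : ℕ) :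
    Wset t \ {-(t n)} ⊆ {b | b ≤ -(t (n + 1))} ∪ {b | -(t (n - 1)) ≤ b} := by
  have hbelow : ∀ b : Zd d, 0 ≤ b → -(t (n - 1)) ≤ b := fun b hb =>
    (neg_nonpos.mpr (h0.trans (hmono (Nat.zero_le _)))).trans hb
  rintro b ⟨(⟨k, rfl⟩ | rfl) | ⟨k, hk⟩, hne⟩
  · exact Or.inr (hbelow _ (h0.trans (hmono (Nat.zero_le k))))
  · exact Or.inr (hbelow 0 le_rfl)
  · obtain rfl : b = -(t k) := neg_eq_iff_eq_neg.mp hk.symm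
    rcases lt_trichotomy k n with hlt | rfl | hgt
    · exact Or.inr (neg_le_neg (hmono (Nat.le_sub_one_of_lt hlt)))
    · exact absurd rfl hne
    · exact Or.inl (neg_le_neg (hmono hgt))

end

lemma sub_le_neg_two_nsmul {G : Type*} [AddCommGroup G] [PartialOrder G] [IsOrderedAddMonoid G]
    {x y : G} (h : 3 • x ≤ y) : x - y ≤ -(2 • x) :=
  calc x - y ≤ x - 3 • x := sub_le_sub_left h x
    _ = -(2 • x) := by abel

theorem stmt6_general {d : ℕ} (t : ℕ → Zd d) (hmono : StrictMono t)
    (hpos : 0 < t 0) (hgrow : ∀ n : ℕ, 3 • t n ≤ t (n + 1)) :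
    ∀ n : ℕ, 1 ≤ n →
      (-(⋃ m : ℕ, ⋃ (_ : 1 ≤ m ∧ m ≤ n), Jset t m)) + (Wset t \ {-(t n)}) ⊆
        {x : Zd d | x ≤ -(2 • t n)} ∪ {x : Zd d | ¬ x ≤ -(t (n - 1))} := by
  rintro n - _ ⟨a, ha, b, hb, rfl⟩
  simp only [Set.mem_neg, Set.mem_iUnion] at ha
  obtain ⟨m, ⟨-, hmn⟩, hJ⟩ := ha
  have ht : ∀ k, 0 ≤ t k := fun k => hpos.le.trans (hmono.monotone (Nat.zero_le k))
  obtain ⟨ha_pos, ha_le⟩ := neg_neg a ▸ neg_mem_Ioc_of_mem_Jset ht hJ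
  rcases Wset_diff_singleton_neg_subset hmono.monotone hpos.le n hb with hb | hb
  · left
    calc a + b ≤ t n - t (n + 1) :=
          sub_eq_add_neg (t n) _ ▸ add_le_add (ha_le.trans (hmono.monotone hmn)) hb
      _ ≤ -(2 • t n) := sub_le_neg_two_nsmul (hgrow n)
  · exact Or.inr (not_le.mpr (hb.trans_lt (lt_add_of_pos_left b ha_pos)))

theorem stmt6 {d : ℕ} (hd : 0 < d) (t : ℕ → Zd d) (hmono : StrictMono t)
    (hpos : 0 < t 0) (hgrow : ∀ n : ℕ, 3 • t n ≤ t (n + 1))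
    (hcoord : ∃ n : ℕ, ∀ i : Fin d, 0 < ofLex (t n) i) :
    ∀ n : ℕ, 1 ≤ n →
      (-(⋃ m : ℕ, ⋃ (_ : 1 ≤ m ∧ m ≤ n), Jset t m)) + (Wset t \ {-(t n)}) ⊆
        {x : Zd d | x ≤ -(2 • t n)} ∪ {x : Zd d | ¬ x ≤ -(t (n - 1))} :=
  stmt6_general t hmono hpos hgrow
end

section
/- Every infinite subset of ℤ^d contains uncountably many subsets each of which is part of a co-minimal pair in ℤ^d; in particular, every infinite subset of ℤ^d has uncountably many subsets admitting a minimal complement. -/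
open Pointwise

/-!
Some coordinate functional `Φ` (up to sign) is unbounded above on the infinite set `A`, so `A`
contains an infinite set `S` on which `Φ` is positive and grows by a factor greater than `3`
between any two values. This lacunarity passes to every infinite subset `T ⊆ S` and makes, for
each `y`, only finitely many `a ∈ T` satisfy `a - a' + b = y` with `a' ≠ a` and `a', b ∈ T`.
Hence a greedy enumeration of `ℤ^d` builds `C` such that every point is uniquely `t + c` with
`t ∈ T`, `c ∈ C`, and unique representation makes `(T, C)` co-minimal. Finally, `S` has
uncountably many infinite subsets.
-/

open Set

section AddCommGroup

variable {G : Type*} [AddCommGroup G]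

theorem isCoMinimalPair_of_injOn_add {A B : Set G} (hAB : A + B = univ)
    (hinj : InjOn (fun p : G × G => p.1 + p.2) (A ×ˢ B)) : IsCoMinimalPair A B := by
  obtain ⟨a₀, ha₀, b₀, hb₀, -⟩ : (0 : G) ∈ A + B := hAB ▸ mem_univ _
  refine ⟨hAB, fun a ha h => ?_, fun b hb h => ?_⟩
  · obtain ⟨a', ⟨ha', hne⟩, b', hb', heq⟩ : a + b₀ ∈ (A \ {a}) + B := h ▸ mem_univ _
    exact hne (congrArg Prod.fst (hinj (mk_mem_prod ha' hb') (mk_mem_prod ha hb₀) heq))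
  · obtain ⟨a', ha', b', ⟨hb', hne⟩, heq⟩ : a₀ + b ∈ A + (B \ {b}) := h ▸ mem_univ _
    exact hne (congrArg Prod.snd (hinj (mk_mem_prod ha' hb') (mk_mem_prod ha₀ hb) heq))

variable {S : Set G}

theorem exists_finite_extension_injOn_add
    (hsparse : ∀ y, {a ∈ S | ∃ a' ∈ S, ∃ b ∈ S, a' ≠ a ∧ a - a' + b = y}.Finite)
    (hS : S.Infinite) {C : Set G} (hC : C.Finite)
    (hinj : InjOn (fun p : G × G => p.1 + p.2) (S ×ˢ C)) (x : G) :
    ∃ C', C ⊆ C' ∧ C'.Finite ∧ InjOn (fun p : G × G => p.1 + p.2) (S ×ˢ C') ∧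
      x ∈ S + C' := by
  by_cases hx : x ∈ S + C
  · exact ⟨C, subset_rfl, hC, hinj, hx⟩
  -- `x - a` can join `C` unless `a` is exceptional for one of the finitely many `x - c`, `c ∈ C`.
  obtain ⟨a, haS, hbad⟩ := (hS.sdiff (hC.biUnion fun c _ => hsparse (x - c))).nonempty
  have hnew : ∀ s ∈ S, ∀ s' ∈ S, ∀ c ∈ C, s + (x - a) ≠ s' + c := by
    rintro s hs s' hs' c hc heq
    by_cases hsa : s = a
    · subst hsa
      exact hx ⟨s', hs', c, hc, heq.symm.trans (add_sub_cancel s x)⟩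
    · refine hbad (mem_biUnion hc ⟨haS, s, hs, s', hs', hsa, ?_⟩)
      rw [show a - s + s' = x - c + (s' + c - (s + (x - a))) by abel, heq, sub_self, add_zero]
  refine ⟨insert (x - a) C, subset_insert _ _, hC.insert _, ?_,
    ⟨a, haS, x - a, mem_insert _ _, add_sub_cancel _ _⟩⟩
  rintro ⟨s, c⟩ ⟨hs, hc⟩ ⟨s', c'⟩ ⟨hs', hc'⟩ (heq : s + c = s' + c')
  rcases hc with rfl | hc <;> rcases hc' with rfl | hc'
  · rw [add_right_cancel heq]
  · exact absurd heq (hnew s hs s' hs' c' hc')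
  · exact absurd heq.symm (hnew s' hs' s hs c hc)
  · exact hinj ⟨hs, hc⟩ ⟨hs', hc'⟩ heq

theorem exists_add_eq_univ_injOn_add [Countable G]
    (hsparse : ∀ y, {a ∈ S | ∃ a' ∈ S, ∃ b ∈ S, a' ≠ a ∧ a - a' + b = y}.Finite)
    (hS : S.Infinite) :
    ∃ C, S + C = univ ∧ InjOn (fun p : G × G => p.1 + p.2) (S ×ˢ C) := by
  obtain ⟨g, hg⟩ := exists_surjective_nat G
  choose! next hsub hfin hinj hmem using
    fun (C : Set G) (hC : C.Finite) hinj x => exists_finite_extension_injOn_add hsparse hS hC hinj x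
  let F : ℕ → Set G := fun n => Nat.rec ∅ (fun n C => next C (g n)) n
  have hF : ∀ n, (F n).Finite ∧ InjOn (fun p : G × G => p.1 + p.2) (S ×ˢ F n) := by
    intro n
    induction n with
    | zero => simp [F]
    | succ n ih => exact ⟨hfin _ ih.1 ih.2 _, hinj _ ih.1 ih.2 _⟩
  have hmono : Monotone F := monotone_nat_of_le_succ fun n => hsub _ (hF n).1 (hF n).2 _
  refine ⟨⋃ n, F n, eq_univ_of_forall fun x => ?_, ?_⟩
  · obtain ⟨n, rfl⟩ := hg x
    exact add_subset_add_left (subset_iUnion F (n + 1)) (hmem _ (hF n).1 (hF n).2 _)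
  · rintro ⟨s, c⟩ ⟨hs, hc⟩ ⟨s', c'⟩ ⟨hs', hc'⟩ heq
    obtain ⟨m, hm⟩ := mem_iUnion.mp hc
    obtain ⟨n, hn⟩ := mem_iUnion.mp hc'
    exact (hF (max m n)).2 ⟨hs, hmono (le_max_left m n) hm⟩
      ⟨hs', hmono (le_max_right m n) hn⟩ heq

def IsLacunary (Φ : G →+ ℤ) (S : Set G) : Prop :=
  (∀ a ∈ S, 0 < Φ a) ∧ S.Pairwise fun a b => 3 * Φ a < Φ b ∨ 3 * Φ b < Φ a

namespace IsLacunary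

variable {Φ : G →+ ℤ} {S : Set G}

theorem mono {T : Set G} (h : IsLacunary Φ S) (hTS : T ⊆ S) : IsLacunary Φ T :=
  ⟨fun a ha => h.1 a (hTS ha), h.2.mono hTS⟩

theorem injOn (h : IsLacunary Φ S) : InjOn Φ S := by
  intro a ha b hb hab
  by_contra hne
  have := h.1 a ha
  rcases h.2 ha hb hne with h' | h' <;> omega

theorem le_three_mul_abs (h : IsLacunary Φ S) {a a' b : G} (ha : a ∈ S) (ha' : a' ∈ S)
    (hb : b ∈ S) (hne : a' ≠ a) : Φ a ≤ 3 * |Φ (a - a' + b)| := by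
  have hb' : Φ b = Φ a' ∨ 3 * Φ b < Φ a' ∨ 3 * Φ a' < Φ b := by
    rcases eq_or_ne b a' with rfl | hba
    · exact Or.inl rfl
    · exact Or.inr (h.2 hb ha' hba)
  have := h.2 ha ha' hne.symm
  have := h.1 a ha
  have := h.1 a' ha'
  have := h.1 b hb
  rw [map_add, map_sub]
  rcases abs_cases (Φ a - Φ a' + Φ b) with ⟨habs, _⟩ | ⟨habs, _⟩ <;> rw [habs] <;> omega

theorem finite_setOf_sub_add_eq (h : IsLacunary Φ S) (y : G) :
    {a ∈ S | ∃ a' ∈ S, ∃ b ∈ S, a' ≠ a ∧ a - a' + b = y}.Finite := by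
  refine Finite.of_finite_image ((finite_Icc 1 (3 * |Φ y|)).subset ?_)
    (h.injOn.mono (sep_subset _ _))
  rintro _ ⟨a, ⟨ha, a', ha', b, hb, hne, rfl⟩, rfl⟩
  exact ⟨h.1 a ha, h.le_three_mul_abs ha ha' hb hne⟩

theorem exists_isCoMinimalPair [Countable G] (h : IsLacunary Φ S) (hS : S.Infinite) :
    ∃ C, IsCoMinimalPair S C := by
  obtain ⟨C, hcov, hinj⟩ := exists_add_eq_univ_injOn_add h.finite_setOf_sub_add_eq hS
  exact ⟨C, isCoMinimalPair_of_injOn_add hcov hinj⟩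

end IsLacunary

theorem exists_infinite_isLacunary_subset {Φ : G →+ ℤ} {A : Set G}
    (hA : ¬BddAbove (Φ '' A)) :
    ∃ S ⊆ A, S.Infinite ∧ IsLacunary Φ S := by
  have hA' : ∀ z : ℤ, ∃ a ∈ A, z < Φ a := fun z => by
    obtain ⟨_, ⟨a, ha, rfl⟩, hz⟩ := not_bddAbove_iff.mp hA z
    exact ⟨a, ha, hz⟩
  choose f hfA hf using hA'
  let s : ℕ → G := fun n => Nat.rec (f 0) (fun _ a => f (3 * Φ a)) n
  have hstep : ∀ n, 3 * Φ (s n) < Φ (s (n + 1)) := fun n => hf _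
  have hpos : ∀ n, 0 < Φ (s n) := by
    intro n
    induction n with
    | zero => exact hf 0
    | succ n ih => have := hstep n; omega
  have hmono : StrictMono (Φ ∘ s) := strictMono_nat_of_lt_succ fun n => by
    have := hstep n
    have := hpos n
    simp only [Function.comp]
    omega
  refine ⟨range s, range_subset_iff.mpr fun n => ?_,
    infinite_range_of_injective hmono.injective.of_comp,
    forall_mem_range.mpr hpos, ?_⟩
  · cases n <;> exact hfA _
  · rintro _ ⟨m, rfl⟩ _ ⟨n, rfl⟩ hne
    rcases lt_or_gt_of_ne (ne_of_apply_ne s hne) with hmn | hmn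
    · exact Or.inl ((hstep m).trans_le (hmono.monotone hmn))
    · exact Or.inr ((hstep n).trans_le (hmono.monotone hmn))

end AddCommGroup

theorem exists_addMonoidHom_not_bddAbove {ι : Type*} [Finite ι] {A : Set (ι → ℤ)}
    (hA : A.Infinite) : ∃ Φ : (ι → ℤ) →+ ℤ, ¬BddAbove (Φ '' A) := by
  have := Fintype.ofFinite ι
  classical
  by_contra! h
  refine hA (BddBelow.finite_of_bddAbove (bddBelow_pi.mpr fun i => ?_)
    (bddAbove_pi.mpr fun i => h (Pi.evalAddMonoidHom _ i)))
  obtain ⟨M, hM⟩ := h (-Pi.evalAddMonoidHom _ i)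
  refine ⟨-M, forall_mem_image.mpr fun x hx => neg_le.mpr ?_⟩
  exact hM (mem_image_of_mem _ hx)

theorem Set.Infinite.not_countable_powerset {α : Type*} {S : Set α} (hS : S.Infinite) :
    ¬(𝒫 S).Countable := by
  have := hS.to_subtype
  rw [← Cardinal.le_aleph0_iff_set_countable, Cardinal.mk_powerset, not_le]
  exact (Cardinal.cantor _).trans_le
    (Cardinal.power_le_power_left two_ne_zero (Cardinal.infinite_iff.mp this))

theorem Set.Infinite.not_countable_setOf_infinite_subset {α : Type*} [Countable α] {S : Set α}
    (hS : S.Infinite) : ¬{T | T ⊆ S ∧ T.Infinite}.Countable := fun h =>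
  hS.not_countable_powerset <| (h.union (countable_ofPred_finite_subset S.to_countable)).mono
    fun T hT => (em T.Finite).elim (fun hfin => Or.inr ⟨hfin, hT⟩)
      fun hinf => Or.inl ⟨hT, hinf⟩

theorem stmt15_general {d : ℕ} (A : Set (Zd d)) (hA : A.Infinite) :
    ¬ {B : Set (Zd d) | B ⊆ A ∧ ∃ C : Set (Zd d), IsCoMinimalPair B C}.Countable ∧
    ¬ {B : Set (Zd d) | B ⊆ A ∧ ∃ C : Set (Zd d), B + C = Set.univ ∧
        ∀ b ∈ B, (B \ {b}) + C ≠ Set.univ}.Countable := by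
  -- `Zd d` is `Fin d → ℤ` with another order; its group structure is that of `Fin d → ℤ`.
  have : Countable (Zd d) := inferInstanceAs (Countable (Fin d → ℤ))
  obtain ⟨Φ, hΦ⟩ := exists_addMonoidHom_not_bddAbove (A := (A : Set (Fin d → ℤ))) hA
  obtain ⟨S, hSA, hS, hlac⟩ :=
    exists_infinite_isLacunary_subset (Φ := (Φ : Zd d →+ ℤ)) hΦ
  have hcomin : ¬{B | B ⊆ A ∧ ∃ C, IsCoMinimalPair B C}.Countable := by
    refine fun h => hS.not_countable_setOf_infinite_subset (h.mono fun T hT => ?_)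
    exact ⟨hT.1.trans hSA, (hlac.mono hT.1).exists_isCoMinimalPair hT.2⟩
  refine ⟨hcomin, fun h => hcomin (h.mono ?_)⟩
  rintro B ⟨hBA, C, hBC, hB, -⟩
  exact ⟨hBA, C, hBC, hB⟩

theorem stmt15 {d : ℕ} (hd : 0 < d) (A : Set (Zd d)) (hA : A.Infinite) :
    ¬ {B : Set (Zd d) | B ⊆ A ∧ ∃ C : Set (Zd d), IsCoMinimalPair B C}.Countable ∧
    ¬ {B : Set (Zd d) | B ⊆ A ∧ ∃ C : Set (Zd d), B + C = Set.univ ∧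
        ∀ b ∈ B, (B \ {b}) + C ≠ Set.univ}.Countable :=
  stmt15_general A hA
end
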